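/- arXiv:1110.6600 — 2 statements merged into one kernel-verified Lean document; each statement's English description precedes it below -/
import Mathlib

section
/- Fix λ ∈ (0,1) and a constant c ≥ 1. For the generalized 2-server problem, if for every finite request sequence ρ the total extended cost satisfies ∇_ρ ≤ c · Opt_ρ, then for every finite request sequence ρ and every run of WFA_λ on ρ, the total distance traveled by the run is at most ((c−1)/λ) · Opt_ρ; in particular WFA_λ is (c−1)/λ-competitive. -/
/-!
Let `Wᵢ` be the work function of the first `i` requests. Since `Wᵢ₊₁ ≤ Wᵢ` on `rᵢ₊₁`, comparing
the WFA choice `sᵢ₊₁` with every `t ∈ rᵢ₊₁` shows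
`λ·d(sᵢ, sᵢ₊₁) ≤ Wᵢ(sᵢ) - Wᵢ₊₁(sᵢ₊₁) + ∇_{rᵢ₊₁}(Wᵢ)`. Summing telescopes from `W₀(O) = 0` to
`λ·cost ≤ ∇_ρ - Wₙ(sₙ) ≤ c·Opt_ρ - Opt_ρ`.
-/

noncomputable section

/-- The sum metric on `X × Y` for the generalized 2-server problem. -/
def dSum {X Y : Type*} [MetricSpace X] [MetricSpace Y] (p q : X × Y) : ℝ :=
  dist p.1 q.1 + dist p.2 q.2

/-- The generalized 2-server request associated with `(x, y)`: `({x} × Y) ∪ (X × {y})`. -/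
def gReq {X Y : Type*} (p : X × Y) : Set (X × Y) := {q | q.1 = p.1 ∨ q.2 = p.2}

/-- The work function of a finite request sequence (requests listed in order of arrival),
starting at origin `O`. For the empty sequence it is `s ↦ d(O, s)`. -/
noncomputable def gWF {X Y : Type*} [MetricSpace X] [MetricSpace Y] (O : X × Y) :
    List (X × Y) → (X × Y) → ℝ
  | [], s => dSum O s
  | p :: l, s => sInf ((fun t => dSum O t + gWF t l s) '' gReq p)

/-- The optimal (offline) cost of serving the request sequence `σ` from origin `O`. -/
noncomputable def gOpt {X Y : Type*} [MetricSpace X] [MetricSpace Y] (O : X × Y)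
    (σ : List (X × Y)) : ℝ := sInf (Set.range (gWF O σ))

/-- The extended cost of the request `r` with respect to the work function `Wf`:
`∇_r(W) = sup_s [ inf_{t ∈ r} (W t + λ·d(s,t)) − W s ]`. -/
noncomputable def extCost {X Y : Type*} [MetricSpace X] [MetricSpace Y] (lam : ℝ)
    (Wf : X × Y → ℝ) (r : Set (X × Y)) : ℝ :=
  sSup (Set.range fun s => sInf ((fun t => Wf t + lam * dSum t s) '' r) - Wf s)

/-- The total extended cost of the request sequence `ρ` from origin `O`:
`∇_ρ = Σᵢ ∇_{rᵢ}(W_{r₁…r_{i−1}})`. -/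
noncomputable def totalExtCost {X Y : Type*} [MetricSpace X] [MetricSpace Y] (lam : ℝ)
    (O : X × Y) (ρ : List (X × Y)) : ℝ :=
  ∑ i ∈ Finset.range ρ.length, extCost lam (gWF O (ρ.take i)) (gReq (ρ.getD i O))

/-- `s 0 = O, s 1, …, s n` is a run of the generalized work function algorithm `WFA_λ` on `ρ`. -/
def gIsWFARun {X Y : Type*} [MetricSpace X] [MetricSpace Y] (lam : ℝ) (O : X × Y)
    (σ : List (X × Y)) (s : ℕ → X × Y) : Prop :=
  s 0 = O ∧ ∀ i < σ.length, ∀ t : X × Y,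
    gWF O (σ.take (i + 1)) (s (i + 1)) + lam * dSum (s i) (s (i + 1)) ≤
      gWF O (σ.take (i + 1)) t + lam * dSum (s i) t


lemma List.take_succ_eq_append_getD {α : Type*} {ρ : List α} {i : ℕ} (hi : i < ρ.length) (d : α) :
    ρ.take (i + 1) = ρ.take i ++ [ρ.getD i d] := by
  rw [List.getD_eq_getElem _ _ hi, List.take_concat_get']

section GeneralizedServer

variable {X Y : Type*}

lemma gReq_nonempty (p : X × Y) : (gReq p).Nonempty := ⟨p, Or.inl rfl⟩

variable [MetricSpace X] [MetricSpace Y]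

lemma dSum_nonneg (p q : X × Y) : 0 ≤ dSum p q :=
  add_nonneg dist_nonneg dist_nonneg

lemma dSum_self (p : X × Y) : dSum p p = 0 := by simp [dSum]

lemma dSum_comm (p q : X × Y) : dSum p q = dSum q p := by
  simp only [dSum, dist_comm]

lemma dSum_triangle (p q r : X × Y) : dSum p r ≤ dSum p q + dSum q r := by
  have h₁ := dist_triangle p.1 q.1 r.1
  have h₂ := dist_triangle p.2 q.2 r.2
  simp only [dSum]
  linarith

lemma dSum_le_gWF (σ : List (X × Y)) (O s : X × Y) : dSum O s ≤ gWF O σ s := by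
  induction σ generalizing O with
  | nil => exact le_rfl
  | cons q σ ih =>
    refine le_csInf ((gReq_nonempty q).image _) ?_
    rintro _ ⟨t, -, rfl⟩
    linarith [dSum_triangle O t s, ih t]

lemma gWF_nonneg (O : X × Y) (σ : List (X × Y)) (s : X × Y) : 0 ≤ gWF O σ s :=
  (dSum_nonneg O s).trans (dSum_le_gWF σ O s)

lemma csInf_dSum_add_gWF_le (O : X × Y) (σ : List (X × Y)) (s : X × Y) {r : Set (X × Y)} {t : X × Y}
    (ht : t ∈ r) :
    sInf ((fun u => dSum O u + gWF u σ s) '' r) ≤ dSum O t + gWF t σ s := by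
  refine csInf_le ⟨0, ?_⟩ ⟨t, ht, rfl⟩
  rintro _ ⟨u, -, rfl⟩
  exact add_nonneg (dSum_nonneg O u) (gWF_nonneg u σ s)

lemma gWF_append_le (p : X × Y) (σ : List (X × Y)) (O : X × Y) {t : X × Y} (ht : t ∈ gReq p) :
    gWF O (σ ++ [p]) t ≤ gWF O σ t := by
  induction σ generalizing O with
  | nil => simpa [gWF, dSum_self] using csInf_dSum_add_gWF_le O [] t ht
  | cons q σ ih =>
    refine le_csInf ((gReq_nonempty q).image _) ?_
    rintro _ ⟨u, hu, rfl⟩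
    exact (csInf_dSum_add_gWF_le O (σ ++ [p]) t hu).trans (by linarith [ih u])

lemma gOpt_le_gWF (O : X × Y) (σ : List (X × Y)) (s : X × Y) : gOpt O σ ≤ gWF O σ s :=
  csInf_le ⟨0, by rintro _ ⟨x, rfl⟩; exact gWF_nonneg O σ x⟩ ⟨s, rfl⟩

/-- Comparing with `t = p` and using `W s ≥ d(O, s) ≥ d(p, s) - d(O, p)`, every term of the
supremum defining `extCost` is at most `W p + d(O, p)` as soon as `λ ≤ 1`. -/
lemma extCost_bddAbove {lam : ℝ} (h0 : 0 ≤ lam) (h1 : lam ≤ 1) {O : X × Y} {W : X × Y → ℝ}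
    (hW : ∀ s, dSum O s ≤ W s) {r : Set (X × Y)} {p : X × Y} (hp : p ∈ r) :
    BddAbove (Set.range fun s => sInf ((fun t => W t + lam * dSum t s) '' r) - W s) := by
  refine ⟨W p + dSum O p, ?_⟩
  rintro _ ⟨s, rfl⟩
  have hinf : sInf ((fun t => W t + lam * dSum t s) '' r) ≤ W p + lam * dSum p s := by
    refine csInf_le ⟨0, ?_⟩ ⟨p, hp, rfl⟩
    rintro _ ⟨t, -, rfl⟩
    exact add_nonneg ((dSum_nonneg O t).trans (hW t)) (mul_nonneg h0 (dSum_nonneg t s))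
  have hps : dSum p s ≤ dSum O p + dSum O s := by
    linarith [dSum_triangle p O s, dSum_comm p O]
  have hlam : lam * dSum p s ≤ dSum O p + dSum O s :=
    (mul_le_of_le_one_left (dSum_nonneg p s) h1).trans hps
  linarith [hW s]

lemma mul_dSum_le_extCost {lam : ℝ} (h0 : 0 ≤ lam) (h1 : lam ≤ 1) {O : X × Y}
    {W W' : X × Y → ℝ} (hW : ∀ s, dSum O s ≤ W s) {r : Set (X × Y)} (hr : r.Nonempty)
    (hW'W : ∀ t ∈ r, W' t ≤ W t) {s s' : X × Y}
    (hs' : ∀ t, W' s' + lam * dSum s s' ≤ W' t + lam * dSum s t) :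
    lam * dSum s s' ≤ W s - W' s' + extCost lam W r := by
  have hinf : W' s' + lam * dSum s s' ≤ sInf ((fun t => W t + lam * dSum t s) '' r) := by
    refine le_csInf (hr.image _) ?_
    rintro _ ⟨t, ht, rfl⟩
    simp only [dSum_comm t s]
    linarith [hs' t, hW'W t ht]
  have hsup : sInf ((fun t => W t + lam * dSum t s) '' r) - W s ≤ extCost lam W r :=
    le_csSup (extCost_bddAbove h0 h1 hW hr.some_mem) ⟨s, rfl⟩
  linarith

lemma gIsWFARun.mul_sum_dSum_le {lam : ℝ} (h0 : 0 ≤ lam) (h1 : lam ≤ 1) {O : X × Y}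
    {ρ : List (X × Y)} {s : ℕ → X × Y} (hrun : gIsWFARun lam O ρ s) :
    lam * ∑ i ∈ Finset.range ρ.length, dSum (s i) (s (i + 1)) ≤
      totalExtCost lam O ρ - gWF O ρ (s ρ.length) := by
  obtain ⟨hs0, hstep⟩ := hrun
  have hmove : ∀ i < ρ.length, lam * dSum (s i) (s (i + 1)) ≤
      gWF O (ρ.take i) (s i) - gWF O (ρ.take (i + 1)) (s (i + 1)) +
        extCost lam (gWF O (ρ.take i)) (gReq (ρ.getD i O)) := by
    intro i hi
    refine mul_dSum_le_extCost h0 h1 (dSum_le_gWF _ O) (gReq_nonempty _) ?_ (hstep i hi)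
    intro t ht
    rw [List.take_succ_eq_append_getD hi O]
    exact gWF_append_le _ _ O ht
  have hW0 : gWF O (ρ.take 0) (s 0) = 0 := by simp [gWF, hs0, dSum_self]
  calc lam * ∑ i ∈ Finset.range ρ.length, dSum (s i) (s (i + 1))
      ≤ ∑ i ∈ Finset.range ρ.length,
          (gWF O (ρ.take i) (s i) - gWF O (ρ.take (i + 1)) (s (i + 1)) +
            extCost lam (gWF O (ρ.take i)) (gReq (ρ.getD i O))) := by
        rw [Finset.mul_sum]
        exact Finset.sum_le_sum fun i hi => hmove i (Finset.mem_range.mp hi)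
    _ = totalExtCost lam O ρ - gWF O ρ (s ρ.length) := by
        rw [Finset.sum_add_distrib, Finset.sum_range_sub', hW0, List.take_length, totalExtCost]
        ring

end GeneralizedServer

theorem extended_cost_bound_implies_competitive_general {X Y : Type*} [MetricSpace X] [MetricSpace Y]
    (lam c : ℝ) (h0 : 0 < lam) (h1 : lam < 1) (O : X × Y)
    (H : ∀ ρ : List (X × Y), totalExtCost lam O ρ ≤ c * gOpt O ρ) :
    ∀ (ρ : List (X × Y)) (s : ℕ → X × Y), gIsWFARun lam O ρ s →
      ∑ i ∈ Finset.range ρ.length, dSum (s i) (s (i + 1)) ≤ ((c - 1) / lam) * gOpt O ρ := by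
  intro ρ s hrun
  have hmove := hrun.mul_sum_dSum_le h0.le h1.le
  have hopt := gOpt_le_gWF O ρ (s ρ.length)
  rw [div_mul_eq_mul_div, le_div_iff₀ h0]
  linarith [H ρ]

/-- If the total extended cost satisfies `∇_ρ ≤ c·Opt_ρ` for every request sequence `ρ`, then
every run of `WFA_λ` travels at most `((c−1)/λ)·Opt_ρ`; i.e. `WFA_λ` is `(c−1)/λ`-competitive. -/
theorem extended_cost_bound_implies_competitive {X Y : Type*} [MetricSpace X] [MetricSpace Y]
    (lam c : ℝ) (h0 : 0 < lam) (h1 : lam < 1) (hc : 1 ≤ c) (O : X × Y)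
    (H : ∀ ρ : List (X × Y), totalExtCost lam O ρ ≤ c * gOpt O ρ) :
    ∀ (ρ : List (X × Y)) (s : ℕ → X × Y), gIsWFARun lam O ρ s →
      ∑ i ∈ Finset.range ρ.length, dSum (s i) (s (i + 1)) ≤ ((c - 1) / lam) * gOpt O ρ :=
  extended_cost_bound_implies_competitive_general lam c h0 h1 O H
end
end

section
/- Let (M,d) be a metric space, λ ∈ (0,1), W : M → ℝ be 1-Lipschitz, s, t ∈ M, and let C ⊆ M be nonempty such that the infimum defining Sl_W(t;C) is attained. Then: (a) Sl_W(t;C) ≥ Sl_W(s;C) − (1+λ)·d(s,t); and (b) if moreover t dominates s with respect to W, then Sl_W(t;C) ≥ Sl_W(s;C) + (1−λ)·d(s,t). -/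
noncomputable section

/-- The slack of a point `s` to a nonempty set `C` with respect to `W`:
`Sl_W(s;C) = inf_{t ∈ C} (W t + λ·d(t,s)) − W s`. -/
noncomputable def Sl {M : Type*} [MetricSpace M] (lam : ℝ) (W : M → ℝ) (s : M)
    (C : Set M) : ℝ :=
  sInf ((fun t => W t + lam * dist t s) '' C) - W s

/-- `t` dominates `s` with respect to `W` if `W s = W t + d(s,t)`. -/
def Dominates {M : Type*} [MetricSpace M] (W : M → ℝ) (t s : M) : Prop :=
  W s = W t + dist s t

/-!
The map `x ↦ inf_{u ∈ C} (W u + λ d(u,x))` is `λ`-Lipschitz, being an infimum of `λ`-Lipschitz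
functions. Hence `Sl_W(t;C) ≥ Sl_W(s;C) + (W s - W t) - λ d(s,t)`, and `W s - W t` is at least
`-d(s,t)` because `W` is 1-Lipschitz, and equals `d(s,t)` when `t` dominates `s`.
-/

open Set

theorem BddBelow.image_of_le_add {α : Type*} {f g : α → ℝ} {C : Set α} {c : ℝ}
    (hgf : ∀ x ∈ C, g x ≤ f x + c) (hg : BddBelow (g '' C)) : BddBelow (f '' C) := by
  obtain ⟨B, hB⟩ := hg
  refine ⟨B - c, ?_⟩
  rintro _ ⟨x, hx, rfl⟩
  linarith [hB (mem_image_of_mem g hx), hgf x hx]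

/-- No boundedness is assumed: if `g` is unbounded below on `C` then so is `f`, and both
infima take the junk value `0`. -/
theorem Real.sInf_image_le_sInf_image_add {α : Type*} {f g : α → ℝ} {C : Set α} {c : ℝ}
    (hc : 0 ≤ c) (h : ∀ x ∈ C, |f x - g x| ≤ c) : sInf (f '' C) ≤ sInf (g '' C) + c := by
  rcases C.eq_empty_or_nonempty with rfl | hne
  · simpa using hc
  have hfg : ∀ x ∈ C, f x ≤ g x + c := fun x hx => by linarith [(abs_le.mp (h x hx)).2]
  have hgf : ∀ x ∈ C, g x ≤ f x + c := fun x hx => by linarith [(abs_le.mp (h x hx)).1]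
  by_cases hg : BddBelow (g '' C)
  · have hf := hg.image_of_le_add hgf
    rw [← sub_le_iff_le_add]
    refine le_csInf (hne.image g) ?_
    rintro _ ⟨x, hx, rfl⟩
    linarith [csInf_le hf (mem_image_of_mem f hx), hfg x hx]
  · have hf : ¬BddBelow (f '' C) := fun hf => hg (hf.image_of_le_add hfg)
    rw [Real.sInf_of_not_bddBelow hf, Real.sInf_of_not_bddBelow hg, zero_add]
    exact hc

theorem sInf_image_add_mul_dist_le {M : Type*} [PseudoMetricSpace M] {lam : ℝ} (hlam : 0 ≤ lam)
    (W : M → ℝ) (s t : M) (C : Set M) :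
    sInf ((fun u => W u + lam * dist u s) '' C) ≤
      sInf ((fun u => W u + lam * dist u t) '' C) + lam * dist s t := by
  refine Real.sInf_image_le_sInf_image_add (by positivity) fun u _ => ?_
  rw [add_sub_add_left_eq_sub, ← mul_sub, abs_mul, abs_of_nonneg hlam]
  gcongr
  simpa only [dist_comm u] using abs_dist_sub_le s t u

theorem Sl_le_Sl_add {M : Type*} [MetricSpace M] {lam : ℝ} (hlam : 0 ≤ lam) (W : M → ℝ)
    (s t : M) (C : Set M) : Sl lam W s C ≤ Sl lam W t C + (W t - W s) + lam * dist s t := by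
  unfold Sl
  linarith [sInf_image_add_mul_dist_le hlam W s t C]

theorem slack_change_base_point_general {M : Type*} [MetricSpace M] (lam : ℝ) (h0 : 0 < lam)
    (W : M → ℝ) (hW : ∀ a b : M, |W a - W b| ≤ dist a b)
    (s t : M) (C : Set M) :
    Sl lam W t C ≥ Sl lam W s C - (1 + lam) * dist s t ∧
      (Dominates W t s → Sl lam W t C ≥ Sl lam W s C + (1 - lam) * dist s t) := by
  have hslack := Sl_le_Sl_add h0.le W s t C
  refine ⟨?_, fun hdom => ?_⟩
  · have hWts : W t - W s ≤ dist s t := dist_comm t s ▸ (abs_le.mp (hW t s)).2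
    linarith
  · rw [Dominates] at hdom
    linarith

/-- Changing the base point of the slack: (a) in general
`Sl_W(t;C) ≥ Sl_W(s;C) − (1+λ)·d(s,t)`, and (b) if `t` dominates `s` then
`Sl_W(t;C) ≥ Sl_W(s;C) + (1−λ)·d(s,t)` (assuming `W` is 1-Lipschitz and the
infimum defining `Sl_W(t;C)` is attained). -/
theorem slack_change_base_point {M : Type*} [MetricSpace M] (lam : ℝ) (h0 : 0 < lam)
    (h1 : lam < 1) (W : M → ℝ) (hW : ∀ a b : M, |W a - W b| ≤ dist a b)
    (s t : M) (C : Set M) (hC : C.Nonempty)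
    (hatt : ∃ u ∈ C, Sl lam W t C = W u + lam * dist u t - W t) :
    Sl lam W t C ≥ Sl lam W s C - (1 + lam) * dist s t ∧
      (Dominates W t s → Sl lam W t C ≥ Sl lam W s C + (1 - lam) * dist s t) :=
  slack_change_base_point_general lam h0 W hW s t C
end
end
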